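/- arXiv:1909.10687 — 3 statements merged into one kernel-verified Lean document; each statement's English description precedes it below -/
import Mathlib

section
/- The space ℱ = {u : ℝ^d → ℝ : u ∈ L²(ℝ^d, m(dx)), Ê(u,u) < ∞} equipped with the norm ‖u‖²_ℱ = ‖u‖²_{L²(ℝ^d, m)} + Ê(u,u) is a Hilbert space (i.e. the norm comes from an inner product and the space is complete). -/
open MeasureTheory Set Filter
open scoped ENNReal Topology

noncomputable section

abbrev Euc (d : ℕ) := EuclideanSpace ℝ (Fin d)

def muDens (d : ℕ) (D : Set (Euc d)) (k : Euc d → Euc d → ℝ) (x : Euc d) : ℝ≥0∞ :=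
  ∫⁻ y in D, ENNReal.ofReal (k x y)

def mMeas (d : ℕ) (D : Set (Euc d)) (k : Euc d → Euc d → ℝ) : Measure (Euc d) :=
  volume.restrict D + (volume.restrict Dᶜ).withDensity (muDens d D k)

/-- The energy `Ê(u,u)` as an `ℝ≥0∞`-valued integral. -/
def hatE (d : ℕ) (D : Set (Euc d)) (k : Euc d → Euc d → ℝ) (u : Euc d → ℝ) : ℝ≥0∞ :=
  (1 / 2 : ℝ≥0∞) * ∫⁻ p in ((univ : Set (Euc d × Euc d)) \ (Dᶜ ×ˢ Dᶜ)),
    ENNReal.ofReal ((u p.1 - u p.2) ^ 2 * k p.1 p.2)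

/-- The energy `Ê(u,u)` as a real integral. -/
def hatEr (d : ℕ) (D : Set (Euc d)) (k : Euc d → Euc d → ℝ) (u : Euc d → ℝ) : ℝ :=
  (1 / 2 : ℝ) * ∫ p in ((univ : Set (Euc d × Euc d)) \ (Dᶜ ×ˢ Dᶜ)),
    (u p.1 - u p.2) ^ 2 * k p.1 p.2

/-- Membership in `ℱ`. -/
def memF (d : ℕ) (D : Set (Euc d)) (k : Euc d → Euc d → ℝ) (u : Euc d → ℝ) : Prop :=
  Measurable u ∧ MemLp u 2 (mMeas d D k) ∧ hatE d D k u < ⊤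

/-- The squared `ℱ`-norm: `‖u‖²_ℱ = ‖u‖²_{L²(m)} + Ê(u,u)`. -/
def normFsq (d : ℕ) (D : Set (Euc d)) (k : Euc d → Euc d → ℝ) (u : Euc d → ℝ) : ℝ :=
  (∫ x, u x ^ 2 ∂(mMeas d D k)) + hatEr d D k u

/-!
The squared norm is the sum of two integrals of expressions quadratic in `u`, so the
parallelogram law holds pointwise under both integrals. In `ℝ≥0∞` it holds without any
integrability assumption, and this also shows that `ℱ` is closed under sums and differences.

A Cauchy sequence in `ℱ` is Cauchy in `L²(m)`, so a subsequence converges `m`-a.e. to some `u`.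
For nonempty open `D`, `k > 0` off the diagonal gives `μ > 0` off `D`, so Lebesgue measure is
absolutely continuous with respect to `m` and the subsequence also converges at both coordinates
of almost every pair `(x, y)` (for `D = ∅` the energy integral is over the empty set). Fatou's
lemma, applied to the `L²(m)` part and to the energy, then bounds `‖U n - u‖²_ℱ` by the Cauchy
modulus.
-/

section EnergyDensity

variable {α : Type*} {k : α → α → ℝ}

def energyDensity (k : α → α → ℝ) (u : α → ℝ) (p : α × α) : ℝ :=
  (u p.1 - u p.2) ^ 2 * k p.1 p.2

lemma energyDensity_nonneg (hk : ∀ x y, x ≠ y → 0 ≤ k x y) (u : α → ℝ) (p : α × α) :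
    0 ≤ energyDensity k u p := by
  rcases eq_or_ne p.1 p.2 with h | h
  · simp [energyDensity, h]
  · exact mul_nonneg (sq_nonneg _) (hk _ _ h)

lemma energyDensity_add_add_sub (k : α → α → ℝ) (u v : α → ℝ) (p : α × α) :
    energyDensity k (u + v) p + energyDensity k (u - v) p =
      2 * energyDensity k u p + 2 * energyDensity k v p := by
  simp only [energyDensity, Pi.add_apply, Pi.sub_apply]
  ring

lemma measurable_energyDensity [MeasurableSpace α] (hk : Measurable (Function.uncurry k))
    {u : α → ℝ} (hu : Measurable u) : Measurable (energyDensity k u) :=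
  (((hu.comp measurable_fst).sub (hu.comp measurable_snd)).pow_const 2).mul hk

lemma tendsto_energyDensity {ι : Type*} {l : Filter ι} {w : ι → α → ℝ} {u : α → ℝ}
    {p : α × α} (h₁ : Tendsto (fun i => w i p.1) l (𝓝 (u p.1)))
    (h₂ : Tendsto (fun i => w i p.2) l (𝓝 (u p.2))) :
    Tendsto (fun i => energyDensity k (w i) p) l (𝓝 (energyDensity k u p)) :=
  ((h₁.sub h₂).pow 2).mul_const _

end EnergyDensity

theorem ENNReal.le_liminf_add {u v : ℕ → ℝ≥0∞} :
    liminf u atTop + liminf v atTop ≤ liminf (u + v) atTop := by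
  simp only [liminf_eq_iSup_iInf_of_nat]
  rw [ENNReal.iSup_add_iSup_of_monotone (fun m n h => biInf_mono fun i hi => h.trans hi)
    (fun m n h => biInf_mono fun i hi => h.trans hi)]
  exact iSup_mono fun n => le_iInf₂ fun i hi => add_le_add (iInf₂_le i hi) (iInf₂_le i hi)

section Lebesgue

variable {β : Type*} [MeasurableSpace β] {μ : Measure β}

lemma lintegral_ofReal_add_add_eq {a b c e : β → ℝ} (ha : Measurable a) (hc : Measurable c)
    (ha₀ : ∀ x, 0 ≤ a x) (hb₀ : ∀ x, 0 ≤ b x) (hc₀ : ∀ x, 0 ≤ c x) (he₀ : ∀ x, 0 ≤ e x)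
    (h : ∀ x, a x + b x = 2 * c x + 2 * e x) :
    ∫⁻ x, ENNReal.ofReal (a x) ∂μ + ∫⁻ x, ENNReal.ofReal (b x) ∂μ =
      2 * ∫⁻ x, ENNReal.ofReal (c x) ∂μ + 2 * ∫⁻ x, ENNReal.ofReal (e x) ∂μ := by
  rw [← lintegral_add_left ha.ennreal_ofReal, ← lintegral_const_mul' _ _ ENNReal.ofNat_ne_top,
    ← lintegral_const_mul' _ _ ENNReal.ofNat_ne_top,
    ← lintegral_add_left (hc.ennreal_ofReal.const_mul _)]
  congr 1 with x
  rw [← ENNReal.ofReal_add (ha₀ x) (hb₀ x), h x,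
    ENNReal.ofReal_add (by linarith [hc₀ x]) (by linarith [he₀ x]),
    ENNReal.ofReal_mul zero_le_two, ENNReal.ofReal_mul zero_le_two, ENNReal.ofReal_ofNat]

lemma lintegral_le_liminf_of_ae_tendsto {f : ℕ → β → ℝ≥0∞} {g : β → ℝ≥0∞}
    (hf : ∀ n, AEMeasurable (f n) μ)
    (hlim : ∀ᵐ x ∂μ, Tendsto (fun n => f n x) atTop (𝓝 (g x))) :
    ∫⁻ x, g x ∂μ ≤ liminf (fun n => ∫⁻ x, f n x ∂μ) atTop :=
  calc ∫⁻ x, g x ∂μ = ∫⁻ x, liminf (fun n => f n x) atTop ∂μ :=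
        lintegral_congr_ae (hlim.mono fun _ hx => hx.liminf_eq.symm)
    _ ≤ liminf (fun n => ∫⁻ x, f n x ∂μ) atTop := lintegral_liminf_le' hf

lemma eLpNorm_two_sq (f : β → ℝ) : eLpNorm f 2 μ ^ 2 = ∫⁻ x, ENNReal.ofReal (f x ^ 2) ∂μ := by
  have h := eLpNorm_nnreal_pow_eq_lintegral (f := f) (μ := μ) (p := 2) two_ne_zero
  simp only [NNReal.coe_ofNat, ENNReal.coe_ofNat, ENNReal.rpow_ofNat] at h
  rw [h]
  congr 1 with x
  rw [Real.enorm_eq_ofReal_abs, ← ENNReal.ofReal_pow (abs_nonneg _), sq_abs]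

lemma lintegral_ofReal_sq_lt_top_iff {f : β → ℝ} (hf : AEStronglyMeasurable f μ) :
    ∫⁻ x, ENNReal.ofReal (f x ^ 2) ∂μ < ⊤ ↔ MemLp f 2 μ := by
  rw [memLp_two_iff_integrable_sq hf, Integrable,
    hasFiniteIntegral_iff_ofReal (ae_of_all _ fun x => sq_nonneg (f x))]
  exact ⟨fun h => ⟨hf.pow 2, h⟩, And.right⟩

lemma exists_subseq_ae_tendsto_of_cauchy_eLpNorm {p : ℝ≥0∞} (hp : 1 ≤ p) {U : ℕ → β → ℝ}
    (hU : ∀ n, MemLp (U n) p μ)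
    (hcau : ∀ ε > 0, ∃ N, ∀ m ≥ N, ∀ n ≥ N, eLpNorm (U m - U n) p μ < ε) :
    ∃ (ns : ℕ → ℕ) (u : β → ℝ), Tendsto ns atTop atTop ∧ Measurable u ∧
      ∀ᵐ x ∂μ, Tendsto (fun i => U (ns i) x) atTop (𝓝 (u x)) := by
  have : Fact (1 ≤ p) := ⟨hp⟩
  let F : ℕ → Lp ℝ p μ := fun n => (hU n).toLp (U n)
  have hF : CauchySeq F := EMetric.cauchySeq_iff.2 fun ε hε =>
    (hcau ε hε).imp fun N hN m hm n hn => by simpa only [F, Lp.edist_toLp_toLp] using hN m hm n hn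
  obtain ⟨G, hG⟩ := cauchySeq_tendsto_of_complete hF
  obtain ⟨ns, hns, hae⟩ := (tendstoInMeasure_of_tendsto_Lp hG).exists_seq_tendsto_ae
  have hGm := Lp.aestronglyMeasurable G
  refine ⟨ns, hGm.mk G, hns.tendsto_atTop, hGm.stronglyMeasurable_mk.measurable, ?_⟩
  filter_upwards [hae, hGm.ae_eq_mk, ae_all_iff.2 fun i => (hU (ns i)).coeFn_toLp]
    with x hx hGx hFx
  simpa only [F, hFx, hGx] using hx

lemma ae_fst_and_snd_of_ae [SFinite μ] {P : β → Prop} (h : ∀ᵐ x ∂μ, P x) :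
    ∀ᵐ q ∂μ.prod μ, P q.1 ∧ P q.2 :=
  (Measure.quasiMeasurePreserving_fst.ae h).and (Measure.quasiMeasurePreserving_snd.ae h)

end Lebesgue

section FSpace

variable {d : ℕ} {D : Set (Euc d)} {k : Euc d → Euc d → ℝ}

lemma hatE_eq (u : Euc d → ℝ) : hatE d D k u =
    1 / 2 * ∫⁻ p in univ \ Dᶜ ×ˢ Dᶜ, ENNReal.ofReal (energyDensity k u p) := rfl

lemma hatEr_eq (u : Euc d → ℝ) : hatEr d D k u =
    1 / 2 * ∫ p in univ \ Dᶜ ×ˢ Dᶜ, energyDensity k u p := rfl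

lemma measurable_muDens (hkm : Measurable (Function.uncurry k)) : Measurable (muDens d D k) :=
  Measurable.lintegral_prod_right hkm.ennreal_ofReal

lemma muDens_pos (hD : IsOpen D) (hne : D.Nonempty) (hkm : Measurable (Function.uncurry k))
    (hkpos : ∀ x y, x ≠ y → 0 < k x y) {x : Euc d} (hx : x ∉ D) : 0 < muDens d D k x := by
  rw [muDens, setLIntegral_pos_iff hkm.of_uncurry_left.ennreal_ofReal]
  have hsupp : Function.support (fun y => ENNReal.ofReal (k x y)) ∩ D = D :=
    inter_eq_right.2 fun y hy =>
      (ENNReal.ofReal_pos.2 (hkpos x y fun hxy => hx (hxy ▸ hy))).ne'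
  rw [hsupp]
  exact hD.measure_pos volume hne

lemma volume_absolutelyContinuous_mMeas (hD : IsOpen D) (hne : D.Nonempty)
    (hkm : Measurable (Function.uncurry k)) (hkpos : ∀ x y, x ≠ y → 0 < k x y) :
    (volume : Measure (Euc d)) ≪ mMeas d D k := by
  have hsplit : (volume : Measure (Euc d)) = volume.restrict D + volume.restrict Dᶜ :=
    (Measure.restrict_add_restrict_compl hD.measurableSet).symm
  rw [hsplit]
  exact Measure.AbsolutelyContinuous.rfl.add
    (withDensity_absolutelyContinuous' (measurable_muDens hkm).aemeasurable
      (ae_restrict_of_forall_mem hD.measurableSet.compl fun x hx =>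
        (muDens_pos hD hne hkm hkpos hx).ne'))

lemma ae_fst_and_snd_of_ae_mMeas (hD : IsOpen D) (hkm : Measurable (Function.uncurry k))
    (hkpos : ∀ x y, x ≠ y → 0 < k x y) {P : Euc d → Prop} (h : ∀ᵐ x ∂mMeas d D k, P x) :
    ∀ᵐ p ∂volume.restrict (univ \ Dᶜ ×ˢ Dᶜ), P p.1 ∧ P p.2 := by
  rcases D.eq_empty_or_nonempty with rfl | hne
  · simp
  · rw [Measure.volume_eq_prod]
    exact ae_restrict_of_ae (ae_fst_and_snd_of_ae
      ((volume_absolutelyContinuous_mMeas hD hne hkm hkpos).ae_le h))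

def enormFsq (d : ℕ) (D : Set (Euc d)) (k : Euc d → Euc d → ℝ) (u : Euc d → ℝ) : ℝ≥0∞ :=
  ∫⁻ x, ENNReal.ofReal (u x ^ 2) ∂mMeas d D k + hatE d D k u

lemma memF_iff_enormFsq_lt_top {u : Euc d → ℝ} :
    memF d D k u ↔ Measurable u ∧ enormFsq d D k u < ⊤ := by
  rw [memF, enormFsq, ENNReal.add_lt_top]
  exact and_congr_right fun hu =>
    and_congr_left' (lintegral_ofReal_sq_lt_top_iff hu.aestronglyMeasurable).symm

lemma enormFsq_add_add_sub (hkm : Measurable (Function.uncurry k))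
    (hk₀ : ∀ x y, x ≠ y → 0 ≤ k x y) {u v : Euc d → ℝ} (hu : Measurable u) (hv : Measurable v) :
    enormFsq d D k (u + v) + enormFsq d D k (u - v) =
      2 * enormFsq d D k u + 2 * enormFsq d D k v := by
  have hL2 := lintegral_ofReal_add_add_eq (μ := mMeas d D k) (b := fun x => (u - v) x ^ 2)
    (e := fun x => v x ^ 2) ((hu.add hv).pow_const 2) (hu.pow_const 2)
    (fun _ => sq_nonneg _) (fun _ => sq_nonneg _) (fun _ => sq_nonneg _) (fun _ => sq_nonneg _)
    (fun x => by simp only [Pi.add_apply, Pi.sub_apply]; ring)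
  have hE := lintegral_ofReal_add_add_eq (μ := volume.restrict (univ \ Dᶜ ×ˢ Dᶜ))
    (measurable_energyDensity hkm (hu.add hv)) (measurable_energyDensity hkm hu)
    (energyDensity_nonneg hk₀ _) (energyDensity_nonneg hk₀ (u - v))
    (energyDensity_nonneg hk₀ _) (energyDensity_nonneg hk₀ v)
    (energyDensity_add_add_sub k u v)
  simp only [enormFsq, hatE_eq]
  rw [add_add_add_comm, ← mul_add, hL2, hE]
  ring

lemma memF.add (hkm : Measurable (Function.uncurry k)) (hk₀ : ∀ x y, x ≠ y → 0 ≤ k x y)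
    {u v : Euc d → ℝ} (hu : memF d D k u) (hv : memF d D k v) : memF d D k (u + v) := by
  obtain ⟨hum, hu⟩ := memF_iff_enormFsq_lt_top.1 hu
  obtain ⟨hvm, hv⟩ := memF_iff_enormFsq_lt_top.1 hv
  exact memF_iff_enormFsq_lt_top.2 ⟨hum.add hvm,
    (le_self_add.trans_eq (enormFsq_add_add_sub hkm hk₀ hum hvm)).trans_lt (by finiteness)⟩

lemma memF.sub (hkm : Measurable (Function.uncurry k)) (hk₀ : ∀ x y, x ≠ y → 0 ≤ k x y)
    {u v : Euc d → ℝ} (hu : memF d D k u) (hv : memF d D k v) : memF d D k (u - v) := by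
  obtain ⟨hum, hu⟩ := memF_iff_enormFsq_lt_top.1 hu
  obtain ⟨hvm, hv⟩ := memF_iff_enormFsq_lt_top.1 hv
  exact memF_iff_enormFsq_lt_top.2 ⟨hum.sub hvm,
    (le_add_self.trans_eq (enormFsq_add_add_sub hkm hk₀ hum hvm)).trans_lt (by finiteness)⟩

lemma hatEr_eq_toReal (hkm : Measurable (Function.uncurry k)) (hk₀ : ∀ x y, x ≠ y → 0 ≤ k x y)
    {u : Euc d → ℝ} (hu : Measurable u) : hatEr d D k u = (hatE d D k u).toReal := by
  rw [hatEr_eq, hatE_eq, ENNReal.toReal_mul, ← integral_eq_lintegral_of_nonneg_ae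
    (ae_of_all _ (energyDensity_nonneg hk₀ u))
    (measurable_energyDensity hkm hu).aestronglyMeasurable]
  norm_num

lemma normFsq_eq_toReal_enormFsq (hkm : Measurable (Function.uncurry k))
    (hk₀ : ∀ x y, x ≠ y → 0 ≤ k x y) {u : Euc d → ℝ} (hu : memF d D k u) :
    normFsq d D k u = (enormFsq d D k u).toReal := by
  obtain ⟨hum, hu2, hE⟩ := hu
  rw [normFsq, enormFsq, ENNReal.toReal_add
    ((lintegral_ofReal_sq_lt_top_iff hum.aestronglyMeasurable).2 hu2).ne hE.ne,
    hatEr_eq_toReal hkm hk₀ hum, integral_eq_lintegral_of_nonneg_ae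
    (ae_of_all _ fun x => sq_nonneg (u x)) (hum.pow_const 2).aestronglyMeasurable]

theorem normFsq_add_add_sub (hkm : Measurable (Function.uncurry k))
    (hk₀ : ∀ x y, x ≠ y → 0 ≤ k x y) {u v : Euc d → ℝ} (hu : memF d D k u) (hv : memF d D k v) :
    normFsq d D k (u + v) + normFsq d D k (u - v) =
      2 * normFsq d D k u + 2 * normFsq d D k v := by
  have hfin : ∀ {w}, memF d D k w → enormFsq d D k w ≠ ⊤ :=
    fun hw => (memF_iff_enormFsq_lt_top.1 hw).2.ne
  rw [normFsq_eq_toReal_enormFsq hkm hk₀ hu, normFsq_eq_toReal_enormFsq hkm hk₀ hv,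
    normFsq_eq_toReal_enormFsq hkm hk₀ (hu.add hkm hk₀ hv),
    normFsq_eq_toReal_enormFsq hkm hk₀ (hu.sub hkm hk₀ hv),
    ← ENNReal.toReal_add (hfin (hu.add hkm hk₀ hv)) (hfin (hu.sub hkm hk₀ hv)),
    enormFsq_add_add_sub hkm hk₀ hu.1 hv.1, ENNReal.toReal_add (by finiteness [hfin hu])
    (by finiteness [hfin hv]), ENNReal.toReal_mul, ENNReal.toReal_mul, ENNReal.toReal_ofNat]

lemma enormFsq_le_liminf (hD : IsOpen D) (hkm : Measurable (Function.uncurry k))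
    (hkpos : ∀ x y, x ≠ y → 0 < k x y) {w : ℕ → Euc d → ℝ} {u : Euc d → ℝ}
    (hw : ∀ n, Measurable (w n))
    (hlim : ∀ᵐ x ∂mMeas d D k, Tendsto (fun n => w n x) atTop (𝓝 (u x))) :
    enormFsq d D k u ≤ liminf (fun n => enormFsq d D k (w n)) atTop := by
  have hL2 : ∫⁻ x, ENNReal.ofReal (u x ^ 2) ∂mMeas d D k ≤
      liminf (fun n => ∫⁻ x, ENNReal.ofReal (w n x ^ 2) ∂mMeas d D k) atTop :=
    lintegral_le_liminf_of_ae_tendsto (fun n => ((hw n).pow_const 2).ennreal_ofReal.aemeasurable)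
      (hlim.mono fun x hx => (ENNReal.continuous_ofReal.tendsto _).comp (hx.pow 2))
  have hE : hatE d D k u ≤ liminf (fun n => hatE d D k (w n)) atTop := by
    simp only [hatE_eq, ← lintegral_const_mul' _ _ (by norm_num : (1 / 2 : ℝ≥0∞) ≠ ⊤)]
    refine lintegral_le_liminf_of_ae_tendsto (fun n =>
      ((measurable_energyDensity hkm (hw n)).ennreal_ofReal.const_mul _).aemeasurable) ?_
    filter_upwards [ae_fst_and_snd_of_ae_mMeas hD hkm hkpos hlim] with p hp
    exact ENNReal.Tendsto.const_mul ((ENNReal.continuous_ofReal.tendsto _).comp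
      (tendsto_energyDensity hp.1 hp.2)) (Or.inr (by norm_num))
  exact (add_le_add hL2 hE).trans (ENNReal.le_liminf_add
    (u := fun n => ∫⁻ x, ENNReal.ofReal (w n x ^ 2) ∂mMeas d D k) (v := fun n => hatE d D k (w n)))

theorem exists_memF_tendsto_normFsq (hD : IsOpen D) (hkm : Measurable (Function.uncurry k))
    (hkpos : ∀ x y, x ≠ y → 0 < k x y) {U : ℕ → Euc d → ℝ} (hU : ∀ n, memF d D k (U n))
    (hcau : ∀ ε : ℝ, 0 < ε → ∃ N : ℕ, ∀ p ≥ N, ∀ q ≥ N, normFsq d D k (U p - U q) < ε) :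
    ∃ u : Euc d → ℝ, memF d D k u ∧ Tendsto (fun n => normFsq d D k (U n - u)) atTop (𝓝 0) := by
  have hk₀ : ∀ x y, x ≠ y → 0 ≤ k x y := fun x y hxy => (hkpos x y hxy).le
  have hcauE : ∀ ε > 0, ∃ N : ℕ, ∀ p ≥ N, ∀ q ≥ N, enormFsq d D k (U p - U q) < ε := by
    intro ε hε
    obtain ⟨r, -, hr₀, hrε⟩ := ENNReal.lt_iff_exists_real_btwn.1 hε
    refine (hcau r (ENNReal.ofReal_pos.1 hr₀)).imp fun N hN p hp q hq => lt_trans ?_ hrε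
    have hpq := (hU p).sub hkm hk₀ (hU q)
    rw [ENNReal.lt_ofReal_iff_toReal_lt (memF_iff_enormFsq_lt_top.1 hpq).2.ne,
      ← normFsq_eq_toReal_enormFsq hkm hk₀ hpq]
    exact hN p hp q hq
  obtain ⟨ns, u, hns, hum, hlim⟩ := exists_subseq_ae_tendsto_of_cauchy_eLpNorm one_le_two
    (fun n => (hU n).2.1) fun ε hε => (hcauE (ε ^ 2) (by positivity)).imp
      fun N hN p hp q hq => by
        rw [← ENNReal.pow_lt_pow_left_iff two_ne_zero, eLpNorm_two_sq]
        exact le_self_add.trans_lt (hN p hp q hq)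
  have hbound : ∀ ε > 0, ∃ N : ℕ, ∀ n ≥ N, enormFsq d D k (U n - u) ≤ ε := by
    refine fun ε hε => (hcauE ε hε).imp fun N hN n hn => ?_
    refine (enormFsq_le_liminf hD hkm hkpos (fun i => (hU n).1.sub (hU (ns i)).1)
      (hlim.mono fun x hx => tendsto_const_nhds.sub hx)).trans
      (liminf_le_of_frequently_le' (Eventually.frequently ?_))
    filter_upwards [hns.eventually_ge_atTop N] with i hi using (hN n hn (ns i) hi).le
  obtain ⟨N, hN⟩ := hbound 1 one_pos
  have hNu : memF d D k (U N - u) :=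
    memF_iff_enormFsq_lt_top.2 ⟨(hU N).1.sub hum, (hN N le_rfl).trans_lt ENNReal.one_lt_top⟩
  have hu : memF d D k u := by simpa using (hU N).sub hkm hk₀ hNu
  refine ⟨u, hu, ?_⟩
  have hE := (ENNReal.tendsto_toReal ENNReal.zero_ne_top).comp (ENNReal.tendsto_atTop_zero.2 hbound)
  rw [ENNReal.toReal_zero] at hE
  exact hE.congr fun n => (normFsq_eq_toReal_enormFsq hkm hk₀ ((hU n).sub hkm hk₀ hu)).symm

theorem statement4_general (d : ℕ)
    (D : Set (Euc d)) (hDopen : IsOpen D)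
    (j : ℝ → ℝ) (hjpos : ∀ r : ℝ, 0 < r → 0 < j r)
    (hjmeas : Measurable j)
    (k : Euc d → Euc d → ℝ) (hk : ∀ x y, k x y = j (dist x y)) :
    (∀ u v : Euc d → ℝ, memF d D k u → memF d D k v →
      normFsq d D k (u + v) + normFsq d D k (u - v) =
        2 * normFsq d D k u + 2 * normFsq d D k v) ∧
    (∀ U : ℕ → Euc d → ℝ, (∀ n, memF d D k (U n)) →
      (∀ ε : ℝ, 0 < ε → ∃ N : ℕ, ∀ p ≥ N, ∀ q ≥ N, normFsq d D k (U p - U q) < ε) →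
      ∃ u : Euc d → ℝ, memF d D k u ∧
        Tendsto (fun n => normFsq d D k (U n - u)) atTop (𝓝 0)) := by
  have hkm : Measurable (Function.uncurry k) := by
    have hkj : Function.uncurry k = fun p : Euc d × Euc d => j (dist p.1 p.2) :=
      funext fun p => hk p.1 p.2
    rw [hkj]
    exact hjmeas.comp measurable_dist
  have hkpos : ∀ x y, x ≠ y → 0 < k x y := fun x y hxy => hk x y ▸ hjpos _ (dist_pos.2 hxy)
  exact ⟨fun u v hu hv => normFsq_add_add_sub hkm (fun x y hxy => (hkpos x y hxy).le) hu hv,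
    fun U hU hcau => exists_memF_tendsto_normFsq hDopen hkm hkpos hU hcau⟩

/-- `(ℱ, ‖·‖_ℱ)` is a Hilbert space: the squared norm satisfies the
parallelogram identity (so the norm comes from an inner product), and the space is
complete: every Cauchy sequence converges in `ℱ`. -/
theorem statement4 (d : ℕ)
    (D : Set (Euc d)) (hDopen : IsOpen D) (hDbdd : Bornology.IsBounded D)
    (hbd : volume (frontier D) = 0)
    (j : ℝ → ℝ) (hjpos : ∀ r : ℝ, 0 < r → 0 < j r)
    (hjmono : ∀ r s : ℝ, 0 < r → r ≤ s → j s ≤ j r) (hjmeas : Measurable j)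
    (k : Euc d → Euc d → ℝ) (hk : ∀ x y, k x y = j (dist x y)) :
    (∀ u v : Euc d → ℝ, memF d D k u → memF d D k v →
      normFsq d D k (u + v) + normFsq d D k (u - v) =
        2 * normFsq d D k u + 2 * normFsq d D k v) ∧
    (∀ U : ℕ → Euc d → ℝ, (∀ n, memF d D k (U n)) →
      (∀ ε : ℝ, 0 < ε → ∃ N : ℕ, ∀ p ≥ N, ∀ q ≥ N, normFsq d D k (U p - U q) < ε) →
      ∃ u : Euc d → ℝ, memF d D k u ∧
        Tendsto (fun n => normFsq d D k (U n - u)) atTop (𝓝 0)) :=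
  statement4_general d D hDopen j hjpos hjmeas k hk
end FSpace
end
end

section
/- Let u ∈ ℱ solve the Dirichlet problem with exterior data φ (so Ê(u,v) = 0 for all v ∈ ℱ_D and u = φ on D^c), and let v ∈ ℱ with v = χ on D^c. Then Ê(u,v) = ∫_{D^c} Ñu(x) χ(x) μ(x) dx, where Ñu(x) = μ(x)⁻¹ ∫_D (u(x)−u(y)) k(x,y) dy. In other words, the Dirichlet-to-Neumann operator N satisfies Nφ = Ñu. -/
/-!
Split `v = 1_D v + 1_{Dᶜ} v`. The exterior part has finite energy because `∫_{Dᶜ} v² μ < ∞`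
(the `L²(m)` condition on `v`), hence so does the interior part, which vanishes on `Dᶜ` and is
therefore annihilated by `Ê(u, ·)`. In `Ê(u, 1_{Dᶜ} v)` the pairs in `D × D` contribute nothing
and, by symmetry of `k`, those in `D × Dᶜ` and `Dᶜ × D` contribute equally, which leaves
`∫_{Dᶜ} v(x) ∫_D (u(x) - u(y)) k(x,y) dy dx`. Off the null set `frontier D`, a point of `Dᶜ` has
positive distance from `D`, so `k(x,·)` is bounded, hence integrable, on `D`, and the inner integral
is `Ñu(x) μ(x)`.
-/

open MeasureTheory Set
open scoped ENNReal

noncomputable section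

/-- `μ(x) = ∫_D k(x,y) dy` as a real number. -/
def muR (d : ℕ) (D : Set (Euc d)) (k : Euc d → Euc d → ℝ) (x : Euc d) : ℝ :=
  ∫ y in D, k x y

def hatEb (d : ℕ) (D : Set (Euc d)) (k : Euc d → Euc d → ℝ) (u v : Euc d → ℝ) : ℝ :=
  (1 / 2 : ℝ) * ∫ p in ((univ : Set (Euc d × Euc d)) \ (Dᶜ ×ˢ Dᶜ)),
    (u p.1 - u p.2) * (v p.1 - v p.2) * k p.1 p.2

/-- The normalized non-local normal derivative
`Ñu(x) = μ(x)⁻¹ ∫_D (u(x) - u(y)) k(x,y) dy`. -/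
def tildeN (d : ℕ) (D : Set (Euc d)) (k : Euc d → Euc d → ℝ) (u : Euc d → ℝ)
    (x : Euc d) : ℝ :=
  (muR d D k x)⁻¹ * ∫ y in D, (u x - u y) * k x y

section Pointwise

variable {X : Type*} {k : X → X → ℝ}

-- Nonnegativity of `k` is only assumed off the diagonal: for `k x y = j (dist x y)` the value
-- `j 0` is unconstrained.

lemma sq_sub_mul_kernel_nonneg (hk : ∀ x y, x ≠ y → 0 ≤ k x y) (f : X → ℝ) (p : X × X) :
    0 ≤ (f p.1 - f p.2) ^ 2 * k p.1 p.2 := by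
  rcases eq_or_ne p.1 p.2 with h | h
  · simp [h]
  · exact mul_nonneg (sq_nonneg _) (hk _ _ h)

lemma abs_sub_mul_sub_mul_kernel_le (hk : ∀ x y, x ≠ y → 0 ≤ k x y) (f g : X → ℝ)
    (p : X × X) :
    |(f p.1 - f p.2) * (g p.1 - g p.2) * k p.1 p.2|
      ≤ (f p.1 - f p.2) ^ 2 * k p.1 p.2 + (g p.1 - g p.2) ^ 2 * k p.1 p.2 := by
  rcases eq_or_ne p.1 p.2 with h | h
  · simp [h]
  · have hk0 := hk _ _ h
    rw [abs_mul, abs_of_nonneg hk0, ← add_mul]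
    gcongr
    rw [abs_le]
    constructor <;> nlinarith [sq_nonneg (f p.1 - f p.2 - (g p.1 - g p.2)),
      sq_nonneg (f p.1 - f p.2 + (g p.1 - g p.2))]

lemma sq_sub_sub_mul_kernel_le (hk : ∀ x y, x ≠ y → 0 ≤ k x y) (f g : X → ℝ) (p : X × X) :
    ((f - g) p.1 - (f - g) p.2) ^ 2 * k p.1 p.2
      ≤ 2 * ((f p.1 - f p.2) ^ 2 * k p.1 p.2) + 2 * ((g p.1 - g p.2) ^ 2 * k p.1 p.2) := by
  rcases eq_or_ne p.1 p.2 with h | h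
  · simp [h]
  · have hk0 := hk _ _ h
    simp only [Pi.sub_apply]
    nlinarith [mul_nonneg (sq_nonneg (f p.1 - f p.2 + (g p.1 - g p.2))) hk0]

end Pointwise

lemma univ_diff_compl_prod_compl {α : Type*} (D : Set α) :
    univ \ (Dᶜ ×ˢ Dᶜ) = D ×ˢ D ∪ D ×ˢ Dᶜ ∪ Dᶜ ×ˢ D := by
  ext p
  simp only [mem_sdiff, mem_univ, true_and, mem_union, mem_prod, mem_compl_iff]
  tauto

lemma ae_notMem_closure_of_notMem {X : Type*} [TopologicalSpace X] [MeasurableSpace X]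
    {μ : Measure X} {D : Set X} (hbd : μ (frontier D) = 0) :
    ∀ᵐ x ∂μ, x ∉ D → x ∉ closure D :=
  (measure_eq_zero_iff_ae_notMem.1 hbd).mono fun x hxf hxD => by
    rw [closure_eq_self_union_frontier]
    exact fun h => h.elim hxD hxf

lemma integrableOn_comp_dist_of_notMem_closure {X : Type*} [PseudoMetricSpace X] [ProperSpace X]
    [MeasurableSpace X] [OpensMeasurableSpace X] {μ : Measure X} [IsFiniteMeasureOnCompacts μ]
    {j : ℝ → ℝ} (hjnn : ∀ r, 0 < r → 0 ≤ j r) (hjmono : ∀ r s, 0 < r → r ≤ s → j s ≤ j r)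
    (hjm : Measurable j) {D : Set X} (hD : MeasurableSet D) (hDbdd : Bornology.IsBounded D)
    {x : X} (hx : x ∉ closure D) :
    IntegrableOn (fun y => j (dist x y)) D μ := by
  rcases D.eq_empty_or_nonempty with rfl | hDne
  · exact integrableOn_empty
  have hr := (Metric.infDist_pos_iff_notMem_closure hDne).1 hx
  refine Measure.integrableOn_of_bounded (M := j (Metric.infDist x D))
    hDbdd.measure_lt_top.ne
    (hjm.comp (continuous_const.dist continuous_id).measurable).aestronglyMeasurable
    (ae_restrict_of_forall_mem hD fun y hy => ?_)
  have hxy := Metric.infDist_le_dist_of_mem (x := x) hy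
  rw [Real.norm_of_nonneg (hjnn _ (hr.trans_le hxy))]
  exact hjmono _ _ hr hxy

section Energy

variable {d : ℕ} {D : Set (Euc d)} {k : Euc d → Euc d → ℝ}

lemma hatE_lt_top_iff (hk : ∀ x y, x ≠ y → 0 ≤ k x y)
    (hkm : Measurable fun p : Euc d × Euc d => k p.1 p.2) {f : Euc d → ℝ} (hf : Measurable f) :
    hatE d D k f < ⊤ ↔ IntegrableOn (fun p : Euc d × Euc d => (f p.1 - f p.2) ^ 2 * k p.1 p.2)
      (univ \ (Dᶜ ×ˢ Dᶜ)) := by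
  have hm : Measurable fun p : Euc d × Euc d => (f p.1 - f p.2) ^ 2 * k p.1 p.2 := by fun_prop
  rw [IntegrableOn, Integrable, and_iff_right hm.aestronglyMeasurable,
    hasFiniteIntegral_iff_ofReal (.of_forall (sq_sub_mul_kernel_nonneg hk f)), hatE]
  simp [lt_top_iff_ne_top, ENNReal.mul_eq_top]

lemma hatE_sub_lt_top (hk : ∀ x y, x ≠ y → 0 ≤ k x y)
    (hkm : Measurable fun p : Euc d × Euc d => k p.1 p.2) {f g : Euc d → ℝ}
    (hf : Measurable f) (hg : Measurable g) (hfE : hatE d D k f < ⊤) (hgE : hatE d D k g < ⊤) :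
    hatE d D k (f - g) < ⊤ := by
  rw [hatE_lt_top_iff hk hkm (hf.sub hg)]
  refine Integrable.mono' ((((hatE_lt_top_iff hk hkm hf).1 hfE).const_mul 2).add
    (((hatE_lt_top_iff hk hkm hg).1 hgE).const_mul 2)) (by fun_prop) (.of_forall fun p => ?_)
  rw [Real.norm_of_nonneg (sq_sub_mul_kernel_nonneg hk _ p)]
  exact sq_sub_sub_mul_kernel_le hk f g p

lemma integrableOn_sub_mul_sub_mul_kernel (hk : ∀ x y, x ≠ y → 0 ≤ k x y)
    (hkm : Measurable fun p : Euc d × Euc d => k p.1 p.2) {f g : Euc d → ℝ}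
    (hf : Measurable f) (hg : Measurable g) (hfE : hatE d D k f < ⊤) (hgE : hatE d D k g < ⊤) :
    IntegrableOn (fun p : Euc d × Euc d => (f p.1 - f p.2) * (g p.1 - g p.2) * k p.1 p.2)
      (univ \ (Dᶜ ×ˢ Dᶜ)) :=
  Integrable.mono' (((hatE_lt_top_iff hk hkm hf).1 hfE).add ((hatE_lt_top_iff hk hkm hg).1 hgE))
    (by fun_prop) (.of_forall fun p => abs_sub_mul_sub_mul_kernel_le hk f g p)

lemma hatEb_add_right (hk : ∀ x y, x ≠ y → 0 ≤ k x y)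
    (hkm : Measurable fun p : Euc d × Euc d => k p.1 p.2) {u f g : Euc d → ℝ}
    (hu : Measurable u) (hf : Measurable f) (hg : Measurable g) (huE : hatE d D k u < ⊤)
    (hfE : hatE d D k f < ⊤) (hgE : hatE d D k g < ⊤) :
    hatEb d D k u (f + g) = hatEb d D k u f + hatEb d D k u g := by
  rw [hatEb, hatEb, hatEb, ← mul_add, ← integral_add
    (integrableOn_sub_mul_sub_mul_kernel hk hkm hu hf huE hfE)
    (integrableOn_sub_mul_sub_mul_kernel hk hkm hu hg huE hgE)]
  congr 2 with p
  simp only [Pi.add_apply]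
  ring

lemma integrableOn_sq_mul_kernel_compl_prod (hk : ∀ x y, x ≠ y → 0 ≤ k x y)
    (hkm : Measurable fun p : Euc d × Euc d => k p.1 p.2) (hD : MeasurableSet D)
    {v : Euc d → ℝ} (hv : memF d D k v) :
    IntegrableOn (fun p : Euc d × Euc d => v p.1 ^ 2 * k p.1 p.2) (Dᶜ ×ˢ D) := by
  obtain ⟨hvm, hvL2, -⟩ := hv
  have hnn : 0 ≤ᵐ[volume.restrict (Dᶜ ×ˢ D)] fun p : Euc d × Euc d => v p.1 ^ 2 * k p.1 p.2 :=
    ae_restrict_of_forall_mem (hD.compl.prod hD) fun p hp =>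
      mul_nonneg (sq_nonneg _) (hk _ _ fun h => hp.1 (h ▸ hp.2))
  have hv2 : Integrable (fun x => v x ^ 2) ((volume.restrict Dᶜ).withDensity (muDens d D k)) :=
    (integrable_add_measure.1 (hvL2.integrable_sq : Integrable _ (mMeas d D k))).2
  refine ⟨(by fun_prop : Measurable _).aestronglyMeasurable, ?_⟩
  rw [hasFiniteIntegral_iff_ofReal hnn]
  calc ∫⁻ p in Dᶜ ×ˢ D, ENNReal.ofReal (v p.1 ^ 2 * k p.1 p.2)
      = ∫⁻ x in Dᶜ, muDens d D k x * ENNReal.ofReal (v x ^ 2) := by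
        rw [Measure.volume_eq_prod, ← Measure.prod_restrict, lintegral_prod _ (by fun_prop)]
        refine lintegral_congr fun x => ?_
        rw [muDens, ← lintegral_mul_const _ (by fun_prop)]
        exact lintegral_congr fun y => by rw [ENNReal.ofReal_mul (sq_nonneg _), mul_comm]
    _ = ∫⁻ x, ENNReal.ofReal (v x ^ 2) ∂(volume.restrict Dᶜ).withDensity (muDens d D k) :=
        (lintegral_withDensity_eq_lintegral_mul _ hkm.ennreal_ofReal.lintegral_prod_right'
          (by fun_prop)).symm
    _ < ⊤ := hv2.lintegral_lt_top

lemma hatE_indicator_compl_lt_top (hk : ∀ x y, x ≠ y → 0 ≤ k x y)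
    (hk_symm : ∀ x y, k x y = k y x) (hkm : Measurable fun p : Euc d × Euc d => k p.1 p.2)
    (hD : MeasurableSet D) {v : Euc d → ℝ} (hv : memF d D k v) :
    hatE d D k (Dᶜ.indicator v) < ⊤ := by
  have hcore := integrableOn_sq_mul_kernel_compl_prod hk hkm hD hv
  have hcore_swap : IntegrableOn (fun p : Euc d × Euc d => v p.2 ^ 2 * k p.1 p.2) (D ×ˢ Dᶜ) := by
    rw [Measure.volume_eq_prod] at hcore ⊢
    exact hcore.swap.congr_fun (fun p _ => by simp [hk_symm p.1]) (hD.prod hD.compl)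
  rw [hatE_lt_top_iff hk hkm (hv.1.indicator hD.compl), univ_diff_compl_prod_compl]
  refine (IntegrableOn.union ?_ ?_).union ?_
  · exact integrableOn_zero.congr_fun (fun p hp => by simp [hp.1, hp.2]) (hD.prod hD)
  · exact hcore_swap.congr_fun (fun p hp => by simp [hp.1, hp.2]) (hD.prod hD.compl)
  · exact hcore.congr_fun (fun p hp => by simp [hp.1, hp.2]) (hD.compl.prod hD)

lemma hatEb_indicator_compl (hk_symm : ∀ x y, k x y = k y x) (hD : MeasurableSet D)
    {u v : Euc d → ℝ}
    (hint : IntegrableOn (fun p : Euc d × Euc d =>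
      (u p.1 - u p.2) * (Dᶜ.indicator v p.1 - Dᶜ.indicator v p.2) * k p.1 p.2)
      (univ \ (Dᶜ ×ˢ Dᶜ))) :
    hatEb d D k u (Dᶜ.indicator v) = ∫ x in Dᶜ, v x * ∫ y in D, (u x - u y) * k x y := by
  set H := fun p : Euc d × Euc d =>
    (u p.1 - u p.2) * (Dᶜ.indicator v p.1 - Dᶜ.indicator v p.2) * k p.1 p.2
  set H' := fun p : Euc d × Euc d => (u p.1 - u p.2) * v p.1 * k p.1 p.2
  rw [univ_diff_compl_prod_compl] at hint
  have hDD : ∫ p in D ×ˢ D, H p = 0 :=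
    setIntegral_eq_zero_of_forall_eq_zero fun p hp => by simp [H, hp.1, hp.2]
  have hDcD : EqOn H H' (Dᶜ ×ˢ D) := fun p hp => by simp [H, H', hp.1, hp.2]
  have hDDc : ∫ p in D ×ˢ Dᶜ, H p = ∫ p in Dᶜ ×ˢ D, H' p := by
    rw [Measure.volume_eq_prod, ← setIntegral_prod_swap]
    refine setIntegral_congr_fun (hD.compl.prod hD) fun p hp => ?_
    simp only [H, H', Prod.fst_swap, Prod.snd_swap, indicator_of_mem hp.1,
      indicator_of_notMem (show p.2 ∉ Dᶜ from not_not_intro hp.2), hk_symm p.2]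
    ring
  have hH' : IntegrableOn H' (Dᶜ ×ˢ D) :=
    (hint.mono_set subset_union_right).congr_fun hDcD (hD.compl.prod hD)
  calc hatEb d D k u (Dᶜ.indicator v)
      = 1 / 2 * ∫ p in D ×ˢ D ∪ D ×ˢ Dᶜ ∪ Dᶜ ×ˢ D, H p := by
        rw [hatEb, univ_diff_compl_prod_compl]
    _ = ∫ p in Dᶜ ×ˢ D, H' p := by
        rw [setIntegral_union ((disjoint_prod.2 (.inl disjoint_compl_right)).union_left
            (disjoint_prod.2 (.inl disjoint_compl_right))) (hD.compl.prod hD)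
            (hint.mono_set subset_union_left) (hint.mono_set subset_union_right),
          setIntegral_union (disjoint_prod.2 (.inr disjoint_compl_right)) (hD.prod hD.compl)
            (hint.mono_set (subset_union_left.trans subset_union_left))
            (hint.mono_set (subset_union_right.trans subset_union_left)),
          hDD, hDDc, setIntegral_congr_fun (hD.compl.prod hD) hDcD]
        ring
    _ = ∫ x in Dᶜ, v x * ∫ y in D, (u x - u y) * k x y := by
        rw [Measure.volume_eq_prod, setIntegral_prod _ hH']
        refine setIntegral_congr_fun hD.compl fun x _ => ?_
        rw [← integral_const_mul]
        congr with y
        ring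

lemma tildeN_mul_muR {x : Euc d} (hD : MeasurableSet D) (hint : IntegrableOn (k x ·) D)
    (hnn : ∀ y ∈ D, 0 ≤ k x y) (u : Euc d → ℝ) :
    tildeN d D k u x * muR d D k x = ∫ y in D, (u x - u y) * k x y := by
  rcases eq_or_ne (muR d D k x) 0 with h0 | h0
  · have hk0 : (k x ·) =ᵐ[volume.restrict D] 0 :=
      (setIntegral_eq_zero_iff_of_nonneg_ae (ae_restrict_of_forall_mem hD hnn) hint).1 h0
    rw [h0, mul_zero, integral_eq_zero_of_ae (hk0.mono fun y hy => by simp [hy])]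
  · rw [tildeN, mul_right_comm, inv_mul_cancel₀ h0, one_mul]

end Energy

theorem statement10_general (d : ℕ)
    (D : Set (Euc d)) (hDopen : IsOpen D) (hDbdd : Bornology.IsBounded D)
    (hbd : volume (frontier D) = 0)
    (j : ℝ → ℝ) (hjpos : ∀ r : ℝ, 0 < r → 0 < j r)
    (hjmono : ∀ r s : ℝ, 0 < r → r ≤ s → j s ≤ j r) (hjmeas : Measurable j)
    (k : Euc d → Euc d → ℝ) (hk : ∀ x y, k x y = j (dist x y))
    (χ : Euc d → ℝ) (u v : Euc d → ℝ)
    (hu : memF d D k u) (hv : memF d D k v)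
    (hvχ : ∀ x ∈ Dᶜ, v x = χ x)
    (hharm : ∀ w : Euc d → ℝ, Measurable w → hatE d D k w < ⊤ →
      w =ᵐ[volume.restrict Dᶜ] 0 → hatEb d D k u w = 0) :
    hatEb d D k u v = ∫ x in Dᶜ, tildeN d D k u x * χ x * muR d D k x := by
  have hD := hDopen.measurableSet
  have hk_nonneg : ∀ x y, x ≠ y → 0 ≤ k x y := fun x y hxy =>
    (hk x y).symm ▸ (hjpos _ (dist_pos.2 hxy)).le
  have hk_symm : ∀ x y, k x y = k y x := fun x y => by rw [hk, hk, dist_comm]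
  have hkm : Measurable fun p : Euc d × Euc d => k p.1 p.2 := by
    simp_rw [hk]
    exact hjmeas.comp measurable_dist
  have he := hv.1.indicator hD.compl
  have heE := hatE_indicator_compl_lt_top hk_nonneg hk_symm hkm hD hv
  have hwE : hatE d D k (D.indicator v) < ⊤ := by
    rw [← sub_sub_cancel v (D.indicator v), ← indicator_compl]
    exact hatE_sub_lt_top hk_nonneg hkm hv.1 he hv.2.2 heE
  have hw0 : hatEb d D k u (D.indicator v) = 0 :=
    hharm _ (hv.1.indicator hD) hwE
      (ae_restrict_of_forall_mem hD.compl fun _ hx => indicator_of_notMem hx v)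
  calc hatEb d D k u v
      = hatEb d D k u (D.indicator v) + hatEb d D k u (Dᶜ.indicator v) := by
        rw [← hatEb_add_right hk_nonneg hkm hu.1 (hv.1.indicator hD) he hu.2.2 hwE heE,
          indicator_self_add_compl]
    _ = ∫ x in Dᶜ, v x * ∫ y in D, (u x - u y) * k x y := by
        rw [hw0, zero_add, hatEb_indicator_compl hk_symm hD
          (integrableOn_sub_mul_sub_mul_kernel hk_nonneg hkm hu.1 he hu.2.2 heE)]
    _ = ∫ x in Dᶜ, tildeN d D k u x * χ x * muR d D k x := by
        refine setIntegral_congr_ae hD.compl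
          ((ae_notMem_closure_of_notMem hbd).mono fun x hx hxD => ?_)
        have hint : IntegrableOn (k x ·) D := by
          simp_rw [hk]
          exact integrableOn_comp_dist_of_notMem_closure (fun r hr => (hjpos r hr).le) hjmono
            hjmeas hD hDbdd (hx hxD)
        rw [hvχ x hxD, mul_right_comm, tildeN_mul_muR hD hint
          (fun y hy => hk_nonneg x y fun h => hxD (h ▸ hy)), mul_comm]

/-- if `u ∈ ℱ` solves the Dirichlet problem with exterior data `φ`
(`Ê(u,v) = 0` for all `v ∈ ℱ_D` and `u = φ` on `Dᶜ`) and `v ∈ ℱ` has `v = χ` on `Dᶜ`,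
then `Ê(u,v) = ∫_{Dᶜ} Ñu(x) χ(x) μ(x) dx`, i.e. the Dirichlet-to-Neumann operator
satisfies `Nφ = Ñu`. -/
theorem statement10 (d : ℕ)
    (D : Set (Euc d)) (hDopen : IsOpen D) (hDbdd : Bornology.IsBounded D)
    (hbd : volume (frontier D) = 0)
    (j : ℝ → ℝ) (hjpos : ∀ r : ℝ, 0 < r → 0 < j r)
    (hjmono : ∀ r s : ℝ, 0 < r → r ≤ s → j s ≤ j r) (hjmeas : Measurable j)
    (k : Euc d → Euc d → ℝ) (hk : ∀ x y, k x y = j (dist x y))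
    (φ χ : Euc d → ℝ) (u v : Euc d → ℝ)
    (hu : memF d D k u) (hv : memF d D k v)
    (huφ : ∀ x ∈ Dᶜ, u x = φ x) (hvχ : ∀ x ∈ Dᶜ, v x = χ x)
    (hharm : ∀ w : Euc d → ℝ, Measurable w → hatE d D k w < ⊤ →
      w =ᵐ[volume.restrict Dᶜ] 0 → hatEb d D k u w = 0) :
    hatEb d D k u v = ∫ x in Dᶜ, tildeN d D k u x * χ x * muR d D k x :=
  statement10_general d D hDopen hDbdd hbd j hjpos hjmono hjmeas k hk χ u v hu hv hvχ hharm
end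
end

section
/- If v is a normal contraction of u ∈ ℱ (i.e. |v(x)−v(y)| ≤ |u(x)−u(y)| for all x,y ∈ ℝ^d and |v(x)| ≤ |u(x)| for all x), then Ê(v,v) ≤ Ê(u,u); together with the density of ℱ in L²(ℝ^d, m(dx)) and the completeness of (ℱ, ‖·‖_ℱ), the pair (Ê, ℱ) is a Dirichlet form on L²(ℝ^d, m(dx)). -/
/-!
A normal contraction decreases the integrand of `Ê` pointwise. For density, write
`f = f 1_D + f 1_{Dᶜ}`. A function `w` vanishing on `D` has energy at most
`∫_{Dᶜ} w² μ ≤ ‖w‖²_{L²(m)}`, so `f 1_{Dᶜ}` is kept as it is: `μ` may blow up at `∂D`, so a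
regularisation that does not vanish there need not lie in `L²(m)`. On `D`, where `m` is Lebesgue
measure, `f` is approximated in `L²` by Lipschitz functions with compact support in `D`; these
have finite energy because `∫ min(1, |z|²) j(|z|) dz < ∞`.
-/

open MeasureTheory Set
open scoped ENNReal

noncomputable section

open Function Metric
open scoped NNReal

section Lipschitz

variable {X : Type*} [MetricSpace X]

def IsLipschitzCompactlySupportedIn (U : Set X) (g : X → ℝ) : Prop :=
  (∃ L, LipschitzWith L g) ∧ HasCompactSupport g ∧ tsupport g ⊆ U

theorem IsLipschitzCompactlySupportedIn.add {U : Set X} {f g : X → ℝ}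
    (hf : IsLipschitzCompactlySupportedIn U f) (hg : IsLipschitzCompactlySupportedIn U g) :
    IsLipschitzCompactlySupportedIn U (f + g) := by
  obtain ⟨⟨Lf, hLf⟩, hf_cpt, hfU⟩ := hf
  obtain ⟨⟨Lg, hLg⟩, hg_cpt, hgU⟩ := hg
  exact ⟨⟨Lf + Lg, hLf.add hLg⟩, hf_cpt.add hg_cpt, (tsupport_add f g).trans (union_subset hfU hgU)⟩

theorem sq_sub_le_of_lipschitzWith {g : X → ℝ} {L : ℝ≥0} {M : ℝ} (hg : LipschitzWith L g)
    (hM : ∀ x, |g x| ≤ M) (x y : X) :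
    (g x - g y) ^ 2 ≤ max ((L : ℝ) ^ 2) (4 * M ^ 2) * min 1 (dist x y ^ 2) := by
  rcases le_total (dist x y ^ 2) 1 with hxy | hxy
  · have hLip : |g x - g y| ≤ L * dist x y := by
      simpa only [Real.dist_eq] using hg.dist_le_mul x y
    rw [min_eq_right hxy]
    calc (g x - g y) ^ 2 ≤ (L * dist x y) ^ 2 :=
          sq_le_sq' (abs_le.mp hLip).1 (abs_le.mp hLip).2
      _ = (L : ℝ) ^ 2 * dist x y ^ 2 := mul_pow _ _ _
      _ ≤ _ := by gcongr; exact le_max_left _ _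
  · have hbdd : |g x - g y| ≤ 2 * M := by
      linarith [abs_sub (g x) (g y), hM x, hM y]
    rw [min_eq_left hxy, mul_one]
    calc (g x - g y) ^ 2 ≤ (2 * M) ^ 2 := sq_le_sq' (abs_le.mp hbdd).1 (abs_le.mp hbdd).2
      _ = 4 * M ^ 2 := by ring
      _ ≤ _ := le_max_right _ _

end Lipschitz

section Density

variable {X : Type*} [MetricSpace X] [ProperSpace X] [MeasurableSpace X] [BorelSpace X]
  {μ : Measure X} [μ.Regular] {U : Set X} {p : ℝ≥0∞}

/-- With `K ⊆ s ∩ U` compact and `V ⊇ K` open, both of nearly the same measure, the function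
`c * thickenedIndicator δ K` differs from `c • 1_s` only on `(s \ K) ∪ (V \ K)`. -/
theorem exists_isLipschitzCompactlySupportedIn_eLpNorm_sub_indicator_le (hU : IsOpen U)
    (hp : p ≠ ∞) (c : ℝ) {s : Set X} (hs : MeasurableSet s) (hμs : μ.restrict U s < ∞)
    {ε : ℝ≥0∞} (hε : ε ≠ 0) :
    ∃ g, eLpNorm (g - s.indicator fun _ => c) p (μ.restrict U) ≤ ε ∧
      IsLipschitzCompactlySupportedIn U g := by
  obtain ⟨η, hη, hηε⟩ := exists_eLpNorm_indicator_le (μ := μ.restrict U) hp c hε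
  have hη2 : (η : ℝ≥0∞) / 2 ≠ 0 := by simpa using hη.ne'
  rw [Measure.restrict_apply hs] at hμs
  obtain ⟨K, hKsU, hK, hμK⟩ := (hs.inter hU.measurableSet).exists_isCompact_sdiff_lt hμs.ne hη2
  obtain ⟨V, hKV, hV, -, hμV⟩ :=
    hK.measurableSet.exists_isOpen_sdiff_lt (hK.measure_lt_top (μ := μ)).ne hη2
  obtain ⟨δ, hδ, hδVU⟩ := hK.exists_cthickening_subset_open (hV.inter hU)
    (subset_inter hKV (hKsU.trans inter_subset_right))
  set t : X → ℝ := fun x => thickenedIndicator hδ K x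
  have ht0 : ∀ x, 0 ≤ t x := fun x => NNReal.coe_nonneg _
  have ht1 : ∀ x, t x ≤ 1 := fun x => NNReal.coe_le_one.mpr (thickenedIndicator_le_one hδ K x)
  have htK : ∀ x ∈ K, t x = 1 := fun x hx => by
    simp only [t, thickenedIndicator_one hδ K hx, NNReal.coe_one]
  have ht_out : ∀ x ∉ thickening δ K, t x = 0 := fun x hx => by
    simp only [t, thickenedIndicator_zero hδ K hx, NNReal.coe_zero]
  have hct : ∀ a, |a| ≤ 1 → |c * a| ≤ |c| := fun a ha => by
    rw [abs_mul]; exact mul_le_of_le_one_right (abs_nonneg c) ha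
  set bad := (s \ K) ∪ (V \ K)
  have hpt : ∀ x, ‖c * t x - s.indicator (fun _ => c) x‖ ≤ ‖bad.indicator (fun _ => c) x‖ := by
    intro x
    rw [Real.norm_eq_abs, Real.norm_eq_abs]
    by_cases hxK : x ∈ K
    · simp [htK x hxK, (hKsU hxK).1]
    by_cases hxs : x ∈ s
    · rw [indicator_of_mem hxs, indicator_of_mem (show x ∈ bad from Or.inl ⟨hxs, hxK⟩),
        show c * t x - c = c * (t x - 1) by ring]
      exact hct _ (abs_le.mpr ⟨by linarith [ht0 x], by linarith [ht1 x]⟩)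
    rw [indicator_of_notMem hxs, sub_zero]
    by_cases hxV : x ∈ V
    · rw [indicator_of_mem (show x ∈ bad from Or.inr ⟨hxV, hxK⟩)]
      exact hct _ (abs_le.mpr ⟨by linarith [ht0 x], ht1 x⟩)
    · have hx : x ∉ thickening δ K := fun hx =>
        hxV (hδVU (thickening_subset_cthickening δ K hx)).1
      simp [ht_out x hx]
  have hbad : μ.restrict U bad ≤ η := calc
    _ ≤ μ.restrict U (s \ K) + μ.restrict U (V \ K) := measure_union_le _ _
    _ ≤ μ ((s ∩ U) \ K) + μ (V \ K) := by
        rw [Measure.restrict_apply' hU.measurableSet, ← inter_sdiff_right_comm]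
        gcongr
        exact Measure.restrict_le_self
    _ ≤ η / 2 + η / 2 := add_le_add hμK.le hμV.le
    _ = η := ENNReal.add_halves _
  have hsupp : ∀ x ∉ cthickening δ K, c * t x = 0 := fun x hx => by
    rw [ht_out x fun h => hx (thickening_subset_cthickening δ K h), mul_zero]
  refine ⟨fun x => c * t x, (eLpNorm_mono hpt).trans (hηε _ hbad),
    ⟨_, (lipschitzWith_smul c).comp
      ((LipschitzWith.subtype_val _).comp (lipschitzWith_thickenedIndicator hδ K))⟩,
    HasCompactSupport.intro' hK.cthickening isClosed_cthickening hsupp, ?_⟩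
  refine (closure_minimal (support_subset_iff'.mpr hsupp) isClosed_cthickening).trans ?_
  exact hδVU.trans inter_subset_right

theorem MeasureTheory.MemLp.exists_isLipschitzCompactlySupportedIn_eLpNorm_sub_le
    (hU : IsOpen U) (hp : p ≠ ∞) {f : X → ℝ} (hf : MemLp f p (μ.restrict U)) {ε : ℝ≥0∞}
    (hε : ε ≠ 0) :
    ∃ g, eLpNorm (f - g) p (μ.restrict U) ≤ ε ∧ IsLipschitzCompactlySupportedIn U g :=
  hf.induction_dense hp _
    (fun c _ hs hμs _ hε => exists_isLipschitzCompactlySupportedIn_eLpNorm_sub_indicator_le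
      hU hp c hs hμs hε)
    (fun _ _ hf hg => hf.add hg)
    (fun _ ⟨⟨_, hL⟩, _⟩ => hL.continuous.aestronglyMeasurable) hε

end Density

theorem setLIntegral_univ_diff_compl_prod_compl_le {X : Type*} [MeasurableSpace X]
    {μ : Measure X} [SFinite μ] {D : Set X} {F : X → X → ℝ≥0∞}
    (hF : Measurable fun p : X × X => F p.1 p.2) (hsymm : ∀ x y, F x y = F y x) :
    ∫⁻ p in univ \ (Dᶜ ×ˢ Dᶜ), F p.1 p.2 ∂(μ.prod μ) ≤ 2 * ∫⁻ x in D, ∫⁻ y, F x y ∂μ ∂μ := by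
  have hsub : univ \ (Dᶜ ×ˢ Dᶜ) ⊆ D ×ˢ univ ∪ univ ×ˢ D := by
    rintro ⟨x, y⟩ hxy
    by_contra h
    simp_all
  have hleft : ∫⁻ p in D ×ˢ univ, F p.1 p.2 ∂(μ.prod μ) = ∫⁻ x in D, ∫⁻ y, F x y ∂μ ∂μ := by
    rw [← Measure.prod_restrict, Measure.restrict_univ, lintegral_prod _ hF.aemeasurable]
  have hright : ∫⁻ p in univ ×ˢ D, F p.1 p.2 ∂(μ.prod μ) = ∫⁻ x in D, ∫⁻ y, F x y ∂μ ∂μ := by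
    rw [← Measure.prod_restrict, Measure.restrict_univ, lintegral_prod_symm _ hF.aemeasurable]
    simp_rw [hsymm]
  calc _ ≤ ∫⁻ p in D ×ˢ univ ∪ univ ×ˢ D, F p.1 p.2 ∂(μ.prod μ) := lintegral_mono_set hsub
    _ ≤ _ := lintegral_union_le _ _ _
    _ = _ := by rw [hleft, hright, two_mul]

theorem lintegral_ofReal_sq_eq_eLpNorm_sq {X : Type*} [MeasurableSpace X] (μ : Measure X)
    (f : X → ℝ) : ∫⁻ x, ENNReal.ofReal (f x ^ 2) ∂μ = eLpNorm f 2 μ ^ 2 := by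
  have h := eLpNorm_nnreal_pow_eq_lintegral (μ := μ) (f := f) (p := 2) two_ne_zero
  simp only [ENNReal.coe_ofNat, NNReal.coe_ofNat, ENNReal.rpow_ofNat] at h
  rw [h]
  refine lintegral_congr fun x => ?_
  rw [← enorm_pow, Real.enorm_of_nonneg (sq_nonneg _)]

section Energy

variable {d : ℕ} {D : Set (Euc d)} {j : ℝ → ℝ} {k : Euc d → Euc d → ℝ}

theorem measurable_prod_of_forall_eq_dist (hjmeas : Measurable j)
    (hk : ∀ x y, k x y = j (dist x y)) : Measurable fun p : Euc d × Euc d => k p.1 p.2 := by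
  simp only [hk]
  exact hjmeas.comp measurable_dist

theorem nonneg_of_ne_of_forall_eq_dist (hjpos : ∀ r : ℝ, 0 < r → 0 < j r)
    (hk : ∀ x y, k x y = j (dist x y)) {x y : Euc d} (hxy : x ≠ y) : 0 ≤ k x y :=
  hk x y ▸ (hjpos _ (dist_pos.mpr hxy)).le

theorem mMeas_restrict_self (hD : MeasurableSet D) :
    (mMeas d D k).restrict D = volume.restrict D := by
  rw [mMeas, Measure.restrict_add, Measure.restrict_restrict hD, inter_self,
    restrict_withDensity hD, Measure.restrict_restrict hD, inter_compl_self,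
    Measure.restrict_empty, withDensity_zero_left, add_zero]

theorem memLp_mMeas_of_isLipschitzCompactlySupportedIn (hD : MeasurableSet D) {g : Euc d → ℝ}
    (hg : IsLipschitzCompactlySupportedIn D g) : MemLp g 2 (mMeas d D k) := by
  obtain ⟨⟨_, hL⟩, hg_cpt, hgD⟩ := hg
  rw [← indicator_eq_self.mpr ((subset_tsupport g).trans hgD),
    memLp_indicator_iff_restrict hD, mMeas_restrict_self hD]
  exact hL.continuous.memLp_of_hasCompactSupport hg_cpt

theorem ofReal_sq_sub_mul_le (hk0 : ∀ x y, x ≠ y → 0 ≤ k x y) {u : Euc d → ℝ} {x y : Euc d}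
    {b : ℝ} (h : (u x - u y) ^ 2 ≤ b) :
    ENNReal.ofReal ((u x - u y) ^ 2 * k x y) ≤ ENNReal.ofReal (b * k x y) := by
  rcases eq_or_ne x y with rfl | hxy
  · simp
  · exact ENNReal.ofReal_le_ofReal (mul_le_mul_of_nonneg_right h (hk0 x y hxy))

theorem hatE_mono_of_abs_sub_le (hk0 : ∀ x y, x ≠ y → 0 ≤ k x y) {u v : Euc d → ℝ}
    (h : ∀ x y, |v x - v y| ≤ |u x - u y|) : hatE d D k v ≤ hatE d D k u :=
  mul_le_mul_right (lintegral_mono fun p : Euc d × Euc d =>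
    ofReal_sq_sub_mul_le hk0 (sq_le_sq.mpr (h p.1 p.2))) _

theorem hatE_add_le (hkm : Measurable fun p : Euc d × Euc d => k p.1 p.2)
    (hk0 : ∀ x y, x ≠ y → 0 ≤ k x y) {u v : Euc d → ℝ} (hu : Measurable u)
    (hv : Measurable v) : hatE d D k (u + v) ≤ 2 * (hatE d D k u + hatE d D k v) := by
  have hpt : ∀ p : Euc d × Euc d,
      ENNReal.ofReal (((u + v) p.1 - (u + v) p.2) ^ 2 * k p.1 p.2) ≤
        2 * ENNReal.ofReal ((u p.1 - u p.2) ^ 2 * k p.1 p.2) +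
          2 * ENNReal.ofReal ((v p.1 - v p.2) ^ 2 * k p.1 p.2) := by
    rintro ⟨x, y⟩
    have hsq : ((u + v) x - (u + v) y) ^ 2 ≤ 2 * (u x - u y) ^ 2 + 2 * (v x - v y) ^ 2 := by
      simp only [Pi.add_apply]
      nlinarith [sq_nonneg (u x - u y - (v x - v y))]
    calc _ ≤ ENNReal.ofReal ((2 * (u x - u y) ^ 2 + 2 * (v x - v y) ^ 2) * k x y) :=
          ofReal_sq_sub_mul_le hk0 hsq
      _ = ENNReal.ofReal (2 * ((u x - u y) ^ 2 * k x y) + 2 * ((v x - v y) ^ 2 * k x y)) := by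
          ring_nf
      _ ≤ _ := by
          refine ENNReal.ofReal_add_le.trans_eq ?_
          rw [ENNReal.ofReal_mul zero_le_two, ENNReal.ofReal_mul zero_le_two, ENNReal.ofReal_ofNat]
  unfold hatE
  calc _ ≤ 1 / 2 * ∫⁻ p in univ \ (Dᶜ ×ˢ Dᶜ),
        (2 * ENNReal.ofReal ((u p.1 - u p.2) ^ 2 * k p.1 p.2) +
          2 * ENNReal.ofReal ((v p.1 - v p.2) ^ 2 * k p.1 p.2)) := by
        gcongr with p
        exact hpt p
    _ = _ := by
        rw [lintegral_add_left (by fun_prop), lintegral_const_mul _ (by fun_prop),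
          lintegral_const_mul _ (by fun_prop)]
        ring

theorem hatE_le_lintegral (hkm : Measurable fun p : Euc d × Euc d => k p.1 p.2)
    (hksymm : ∀ x y, k x y = k y x) {u : Euc d → ℝ} (hu : Measurable u) :
    hatE d D k u ≤ ∫⁻ x in D, ∫⁻ y, ENNReal.ofReal ((u x - u y) ^ 2 * k x y) := by
  have h := setLIntegral_univ_diff_compl_prod_compl_le (μ := volume) (D := D)
    (F := fun x y => ENNReal.ofReal ((u x - u y) ^ 2 * k x y)) (by fun_prop)
    (fun x y => by rw [hksymm, ← neg_sub, neg_sq])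
  rw [hatE, Measure.volume_eq_prod]
  calc _ ≤ 1 / 2 * (2 * ∫⁻ x in D, ∫⁻ y, ENNReal.ofReal ((u x - u y) ^ 2 * k x y)) := by gcongr
    _ = _ := by
        rw [← mul_assoc, one_div, ENNReal.inv_mul_cancel two_ne_zero ENNReal.ofNat_ne_top, one_mul]

/-- A function vanishing on `D` only sees the jumps between `D` and `Dᶜ`, whose total rate out of
`y ∈ Dᶜ` is the density `μ(y)` of `m` there. -/
theorem hatE_le_lintegral_mMeas_of_eqOn_zero (hD : MeasurableSet D)
    (hkm : Measurable fun p : Euc d × Euc d => k p.1 p.2) (hksymm : ∀ x y, k x y = k y x)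
    {w : Euc d → ℝ} (hw : Measurable w) (hw0 : ∀ x ∈ D, w x = 0) :
    hatE d D k w ≤ ∫⁻ x, ENNReal.ofReal (w x ^ 2) ∂mMeas d D k := by
  have hmu : Measurable (muDens d D k) := by
    unfold muDens
    exact Measurable.lintegral_prod_right'
      (f := fun p : Euc d × Euc d => ENNReal.ofReal (k p.1 p.2)) (by fun_prop)
  calc hatE d D k w ≤ ∫⁻ x in D, ∫⁻ y, ENNReal.ofReal ((w x - w y) ^ 2 * k x y) :=
        hatE_le_lintegral hkm hksymm hw
    _ = ∫⁻ x in D, ∫⁻ y, ENNReal.ofReal (k y x) * ENNReal.ofReal (w y ^ 2) := by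
        refine setLIntegral_congr_fun hD fun x hx => lintegral_congr fun y => ?_
        rw [hw0 x hx, zero_sub, neg_sq, ENNReal.ofReal_mul (sq_nonneg _), hksymm, mul_comm]
    _ = ∫⁻ y, muDens d D k y * ENNReal.ofReal (w y ^ 2) := by
        rw [lintegral_lintegral_swap (by fun_prop)]
        exact lintegral_congr fun y => lintegral_mul_const _ (by fun_prop)
    _ = ∫⁻ y in Dᶜ, muDens d D k y * ENNReal.ofReal (w y ^ 2) :=
        (setLIntegral_eq_of_support_subset (s := Dᶜ) fun y hy hyD =>
          hy (by simp [hw0 y hyD])).symm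
    _ = ∫⁻ y, ENNReal.ofReal (w y ^ 2) ∂(volume.restrict Dᶜ).withDensity (muDens d D k) :=
        (lintegral_withDensity_eq_lintegral_mul _ hmu (by fun_prop)).symm
    _ ≤ _ := lintegral_mono' (Measure.le_add_left le_rfl) le_rfl

theorem hatE_lt_top_of_lipschitzWith (hDfin : volume D < ∞)
    (hjpos : ∀ r : ℝ, 0 < r → 0 < j r) (hjmeas : Measurable j)
    (hjint : ∫⁻ z : Euc d, ENNReal.ofReal ((min 1 (‖z‖ ^ 2)) * j ‖z‖) < ⊤)
    (hk : ∀ x y, k x y = j (dist x y)) {g : Euc d → ℝ} {L : ℝ≥0} {M : ℝ}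
    (hg : LipschitzWith L g) (hM : ∀ x, |g x| ≤ M) : hatE d D k g < ⊤ := by
  set C := max ((L : ℝ) ^ 2) (4 * M ^ 2)
  have hC : 0 ≤ C := le_max_of_le_left (sq_nonneg _)
  set φ : Euc d → ℝ≥0∞ := fun z => ENNReal.ofReal (C * (min 1 (‖z‖ ^ 2) * j ‖z‖)) with hφ_def
  have hφ : ∫⁻ z, φ z < ⊤ := by
    simp_rw [hφ_def, ENNReal.ofReal_mul hC]
    rw [lintegral_const_mul _ (by fun_prop)]
    exact ENNReal.mul_lt_top ENNReal.ofReal_lt_top hjint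
  have hpt : ∀ x y, ENNReal.ofReal ((g x - g y) ^ 2 * k x y) ≤ φ (x - y) := fun x y => by
    refine (ofReal_sq_sub_mul_le (fun _ _ => nonneg_of_ne_of_forall_eq_dist hjpos hk)
      (sq_sub_le_of_lipschitzWith hg hM x y)).trans_eq ?_
    rw [hk, dist_eq_norm, mul_assoc]
  calc hatE d D k g ≤ ∫⁻ x in D, ∫⁻ y, ENNReal.ofReal ((g x - g y) ^ 2 * k x y) :=
        hatE_le_lintegral (measurable_prod_of_forall_eq_dist hjmeas hk)
          (fun x y => by rw [hk, hk, dist_comm]) hg.continuous.measurable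
    _ ≤ ∫⁻ x in D, ∫⁻ y, φ (x - y) := by gcongr with x y; exact hpt x y
    _ = volume D * ∫⁻ z, φ z := by
        simp_rw [lintegral_sub_left_eq_self φ]
        rw [setLIntegral_const, mul_comm]
    _ < ⊤ := ENNReal.mul_lt_top hDfin hφ

theorem memF_of_abs_le (hk0 : ∀ x y, x ≠ y → 0 ≤ k x y) {u v : Euc d → ℝ} (hu : memF d D k u)
    (hv : Measurable v) (h : ∀ x y, |v x - v y| ≤ |u x - u y|) (h' : ∀ x, |v x| ≤ |u x|) :
    memF d D k v :=
  ⟨hv, hu.2.1.of_le hv.aestronglyMeasurable (ae_of_all _ fun x => by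
    simpa only [Real.norm_eq_abs] using h' x), (hatE_mono_of_abs_sub_le hk0 h).trans_lt hu.2.2⟩

theorem exists_memF_lintegral_sub_sq_lt (hDopen : IsOpen D) (hDbdd : Bornology.IsBounded D)
    (hjpos : ∀ r : ℝ, 0 < r → 0 < j r) (hjmeas : Measurable j)
    (hjint : ∫⁻ z : Euc d, ENNReal.ofReal ((min 1 (‖z‖ ^ 2)) * j ‖z‖) < ⊤)
    (hk : ∀ x y, k x y = j (dist x y)) {f : Euc d → ℝ} (hf : Measurable f)
    (hf2 : MemLp f 2 (mMeas d D k)) {ε : ℝ} (hε : 0 < ε) :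
    ∃ g, memF d D k g ∧ ∫⁻ x, ENNReal.ofReal ((f x - g x) ^ 2) ∂mMeas d D k < ENNReal.ofReal ε := by
  have hD := hDopen.measurableSet
  have hkm := measurable_prod_of_forall_eq_dist hjmeas hk
  have hk0 : ∀ x y, x ≠ y → 0 ≤ k x y := fun _ _ => nonneg_of_ne_of_forall_eq_dist hjpos hk
  obtain ⟨g₁, hfg₁, hg₁⟩ := (mMeas_restrict_self hD ▸ hf2.restrict D :
    MemLp f 2 (volume.restrict D)).exists_isLipschitzCompactlySupportedIn_eLpNorm_sub_le hDopen
    ENNReal.ofNat_ne_top (ε := ENNReal.ofReal (√ε / 2)) (by positivity)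
  have hg₁m := memLp_mMeas_of_isLipschitzCompactlySupportedIn (k := k) hD hg₁
  obtain ⟨⟨L, hL⟩, hg₁_cpt, hg₁D⟩ := hg₁
  obtain ⟨M, hM⟩ := hL.continuous.bounded_above_of_compact_support hg₁_cpt
  set g₂ := Dᶜ.indicator f
  have hg₂ : MemLp g₂ 2 (mMeas d D k) := hf2.indicator hD.compl
  have hE₂ : hatE d D k g₂ < ⊤ :=
    (hatE_le_lintegral_mMeas_of_eqOn_zero hD hkm (fun x y => by rw [hk, hk, dist_comm])
      (hf.indicator hD.compl) fun x hx => indicator_of_notMem (not_not.mpr hx) f).trans_lt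
      hg₂.integrable_sq.lintegral_lt_top
  have hE₁ : hatE d D k g₁ < ⊤ :=
    hatE_lt_top_of_lipschitzWith hDbdd.measure_lt_top hjpos hjmeas hjint hk hL hM
  refine ⟨g₁ + g₂, ⟨hL.continuous.measurable.add (hf.indicator hD.compl), hg₁m.add hg₂,
    (hatE_add_le hkm hk0 hL.continuous.measurable (hf.indicator hD.compl)).trans_lt
      (ENNReal.mul_lt_top ENNReal.ofNat_lt_top (ENNReal.add_lt_top.mpr ⟨hE₁, hE₂⟩))⟩, ?_⟩
  have hdiff : ∀ x, ENNReal.ofReal ((f x - (g₁ + g₂) x) ^ 2) =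
      D.indicator (fun x => ENNReal.ofReal ((f - g₁) x ^ 2)) x := by
    intro x
    by_cases hx : x ∈ D
    · simp [g₂, hx]
    · simp [g₂, hx, image_eq_zero_of_notMem_tsupport fun h => hx (hg₁D h)]
  calc ∫⁻ x, ENNReal.ofReal ((f x - (g₁ + g₂) x) ^ 2) ∂mMeas d D k
      = ∫⁻ x in D, ENNReal.ofReal ((f - g₁) x ^ 2) := by
        rw [lintegral_congr hdiff, lintegral_indicator hD, mMeas_restrict_self hD]
    _ = eLpNorm (f - g₁) 2 (volume.restrict D) ^ 2 := lintegral_ofReal_sq_eq_eLpNorm_sq _ _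
    _ ≤ ENNReal.ofReal (√ε / 2) ^ 2 := by gcongr
    _ < ENNReal.ofReal ε := by
        rw [← ENNReal.ofReal_pow (by positivity), ENNReal.ofReal_lt_ofReal_iff hε, div_pow,
          Real.sq_sqrt hε.le]
        linarith

end Energy

theorem statement13_general (d : ℕ)
    (D : Set (Euc d)) (hDopen : IsOpen D) (hDbdd : Bornology.IsBounded D)
    (j : ℝ → ℝ) (hjpos : ∀ r : ℝ, 0 < r → 0 < j r)
    (hjmeas : Measurable j)
    (hjint : ∫⁻ z : Euc d, ENNReal.ofReal ((min 1 (‖z‖ ^ 2)) * j ‖z‖) < ⊤)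
    (k : Euc d → Euc d → ℝ) (hk : ∀ x y, k x y = j (dist x y)) :
    (∀ u v : Euc d → ℝ, memF d D k u → Measurable v →
      (∀ x y, |v x - v y| ≤ |u x - u y|) → (∀ x, |v x| ≤ |u x|) →
      memF d D k v ∧ hatE d D k v ≤ hatE d D k u) ∧
    (∀ f : Euc d → ℝ, Measurable f → MemLp f 2 (mMeas d D k) →
      ∀ ε : ℝ, 0 < ε → ∃ g : Euc d → ℝ, memF d D k g ∧
        ∫⁻ x, ENNReal.ofReal ((f x - g x) ^ 2) ∂(mMeas d D k) < ENNReal.ofReal ε) := by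
  have hk0 : ∀ x y, x ≠ y → 0 ≤ k x y := fun _ _ => nonneg_of_ne_of_forall_eq_dist hjpos hk
  exact ⟨fun u v hu hv h h' => ⟨memF_of_abs_le hk0 hu hv h h', hatE_mono_of_abs_sub_le hk0 h⟩,
    fun _ hf hf2 _ hε =>
      exists_memF_lintegral_sub_sq_lt hDopen hDbdd hjpos hjmeas hjint hk hf hf2 hε⟩

/-- normal contractions operate on `(Ê, ℱ)`: if `v` is a normal contraction
of `u ∈ ℱ` then `v ∈ ℱ` and `Ê(v,v) ≤ Ê(u,u)`; moreover `ℱ` is dense in `L²(ℝ^d, m)`.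
(Together with closedness, this says `(Ê, ℱ)` is a Dirichlet form on `L²(ℝ^d, m)`.) -/
theorem statement13 (d : ℕ) (hd : 2 ≤ d)
    (D : Set (Euc d)) (hDopen : IsOpen D) (hDbdd : Bornology.IsBounded D)
    (hbd : volume (frontier D) = 0)
    (j : ℝ → ℝ) (hjpos : ∀ r : ℝ, 0 < r → 0 < j r)
    (hjmono : ∀ r s : ℝ, 0 < r → r ≤ s → j s ≤ j r) (hjmeas : Measurable j)
    (hjint : ∫⁻ z : Euc d, ENNReal.ofReal ((min 1 (‖z‖ ^ 2)) * j ‖z‖) < ⊤)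
    (k : Euc d → Euc d → ℝ) (hk : ∀ x y, k x y = j (dist x y)) :
    (∀ u v : Euc d → ℝ, memF d D k u → Measurable v →
      (∀ x y, |v x - v y| ≤ |u x - u y|) → (∀ x, |v x| ≤ |u x|) →
      memF d D k v ∧ hatE d D k v ≤ hatE d D k u) ∧
    (∀ f : Euc d → ℝ, Measurable f → MemLp f 2 (mMeas d D k) →
      ∀ ε : ℝ, 0 < ε → ∃ g : Euc d → ℝ, memF d D k g ∧
        ∫⁻ x, ENNReal.ofReal ((f x - g x) ^ 2) ∂(mMeas d D k) < ENNReal.ofReal ε) :=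
  statement13_general d D hDopen hDbdd j hjpos hjmeas hjint k hk
end
end
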